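/- Let α = 1 (so f_1 is twice the Takagi function) and let x, y be dyadic rationals in [0,1]. Then f_1((x+y)/2) = (f_1(x)+f_1(y))/2 + |x−y| holds if and only if there exist integers j and r such that (x = j/2^r or y = j/2^r) and |x − y| ≤ 1/2^r. -/
import Mathlib

/-- The tent map `φ(x) = 2 inf{|x-n| : n ∈ ℤ}`. -/
noncomputable def tent (x : ℝ) : ℝ := 2 * ⨅ n : ℤ, |x - (n:ℝ)|

/-- `f_α(x) = ∑_{j=0}^∞ 2^{-αj} φ(2^j x)`. -/
noncomputable def takagi (α x : ℝ) : ℝ :=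
  ∑' j : ℕ, (1 / (2:ℝ) ^ (α * (j:ℝ))) * tent ((2:ℝ) ^ (j:ℕ) * x)

lemma tent_bdd (x : ℝ) : BddBelow (Set.range fun n : ℤ => |x - (n:ℝ)|) :=
  ⟨0, by rintro _ ⟨n, rfl⟩; positivity⟩

lemma tent_nonneg (x : ℝ) : 0 ≤ tent x := by
  have : (0:ℝ) ≤ ⨅ n : ℤ, |x - (n:ℝ)| := le_ciInf fun n => abs_nonneg _
  unfold tent; linarith

lemma tent_le_one (x : ℝ) : tent x ≤ 1 := by
  have h : (⨅ n : ℤ, |x - (n:ℝ)|) ≤ |x - round x| := by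
    have := ciInf_le (tent_bdd x) (round x)
    simpa using this
  have h2 := abs_sub_round x
  unfold tent; linarith

lemma tent_left {x : ℝ} (h0 : 0 ≤ x) (h1 : x ≤ 1/2) : tent x = 2 * x := by
  have h : (⨅ n : ℤ, |x - (n:ℝ)|) = x := by
    apply le_antisymm
    · have := ciInf_le (tent_bdd x) 0
      simpa [abs_of_nonneg h0] using this
    · apply le_ciInf
      intro n
      rcases le_or_gt (n:ℝ) 0 with hn | hn
      · calc x = x - 0 := by ring
          _ ≤ x - n := by linarith
          _ ≤ |x - n| := le_abs_self _
      · have hn1 : (1:ℝ) ≤ n := by exact_mod_cast hn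
        calc x ≤ 1 - x := by linarith
          _ ≤ (n:ℝ) - x := by linarith
          _ = -(x - n) := by ring
          _ ≤ |x - n| := neg_le_abs _
  unfold tent; rw [h]

lemma tent_right {x : ℝ} (h0 : 1/2 ≤ x) (h1 : x ≤ 1) : tent x = 2 * (1 - x) := by
  have h : (⨅ n : ℤ, |x - (n:ℝ)|) = 1 - x := by
    apply le_antisymm
    · have := ciInf_le (tent_bdd x) 1
      have e : |x - ((1:ℤ):ℝ)| = 1 - x := by
        rw [abs_of_nonpos (by push_cast; linarith)]; push_cast; ring
      rw [e] at this; exact this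
    · apply le_ciInf
      intro n
      rcases le_or_gt (n:ℝ) 0 with hn | hn
      · calc (1:ℝ) - x ≤ x := by linarith
          _ ≤ x - n := by linarith
          _ ≤ |x - n| := le_abs_self _
      · have hn1 : (1:ℝ) ≤ n := by exact_mod_cast hn
        calc (1:ℝ) - x ≤ (n:ℝ) - x := by linarith
          _ = -(x - n) := by ring
          _ ≤ |x - n| := neg_le_abs _
  unfold tent; rw [h]

lemma tent_add_int (x : ℝ) (k : ℤ) : tent (x + k) = tent x := by
  unfold tent
  congr 1
  apply le_antisymm
  · apply le_ciInf; intro n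
    have := ciInf_le (tent_bdd (x + k)) (n + k)
    calc (⨅ m : ℤ, |x + k - (m:ℝ)|) ≤ |x + k - ((n + k : ℤ):ℝ)| := this
      _ = |x - n| := by push_cast; ring_nf
  · apply le_ciInf; intro n
    have := ciInf_le (tent_bdd x) (n - k)
    calc (⨅ m : ℤ, |x - (m:ℝ)|) ≤ |x - ((n - k : ℤ):ℝ)| := this
      _ = |x + k - n| := by push_cast; ring_nf

lemma tent_neg (x : ℝ) : tent (-x) = tent x := by
  unfold tent
  congr 1
  apply le_antisymm
  · apply le_ciInf; intro n
    have := ciInf_le (tent_bdd (-x)) (-n)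
    calc (⨅ m : ℤ, |-x - (m:ℝ)|) ≤ |-x - ((-n : ℤ):ℝ)| := this
      _ = |x - n| := by push_cast; rw [← abs_neg]; ring_nf
  · apply le_ciInf; intro n
    have := ciInf_le (tent_bdd x) (-n)
    calc (⨅ m : ℤ, |x - (m:ℝ)|) ≤ |x - ((-n : ℤ):ℝ)| := this
      _ = |-x - n| := by push_cast; rw [← abs_neg]; ring_nf

lemma tent_zero : tent 0 = 0 := by
  have := tent_left (x := 0) le_rfl (by norm_num); simpa using this

lemma tent_int (k : ℤ) : tent (k:ℝ) = 0 := by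
  have := tent_add_int 0 k; simpa [tent_zero] using this

noncomputable def f (x : ℝ) : ℝ := ∑' j : ℕ, (1/2:ℝ)^j * tent (2^j * x)

lemma f_summable (x : ℝ) : Summable (fun j : ℕ => (1/2:ℝ)^j * tent (2^j * x)) := by
  apply Summable.of_nonneg_of_le
    (fun j => mul_nonneg (by positivity) (tent_nonneg _))
    (fun j => by
      have := tent_le_one (2^j * x)
      calc (1/2:ℝ)^j * tent (2^j * x) ≤ (1/2:ℝ)^j * 1 :=
            mul_le_mul_of_nonneg_left this (by positivity)
        _ = (1/2:ℝ)^j := mul_one _)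
  exact summable_geometric_of_lt_one (by norm_num) (by norm_num)

lemma takagi_one_eq (x : ℝ) : takagi 1 x = f x := by
  unfold takagi f
  apply tsum_congr
  intro j
  congr 1
  rw [one_mul, Real.rpow_natCast]
  rw [div_pow, one_pow, one_div]

lemma f_nonneg (x : ℝ) : 0 ≤ f x :=
  tsum_nonneg fun j => mul_nonneg (by positivity) (tent_nonneg _)

lemma f_ge_tent (x : ℝ) : tent x ≤ f x := by
  have := Summable.le_tsum (f_summable x) 0
    (fun j _ => mul_nonneg (by positivity) (tent_nonneg _))
  unfold f
  simpa using this

lemma f_zero : f 0 = 0 := by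
  unfold f
  simp [tent_zero]

lemma f_one : f 1 = 0 := by
  unfold f
  have e : (fun j : ℕ => (1/2:ℝ)^j * tent (2^j * 1)) = fun _ => (0:ℝ) := by
    funext j
    have h : ((2:ℝ)^j * 1) = (((2:ℤ)^j : ℤ) : ℝ) := by push_cast; ring
    rw [h, tent_int, mul_zero]
  rw [e, tsum_zero]

lemma f_split (x : ℝ) : f x = tent x + (1/2) * f (2 * x) := by
  unfold f
  rw [Summable.tsum_eq_zero_add (f_summable x)]
  congr 1
  · simp
  · rw [← tsum_mul_left]
    apply tsum_congr
    intro j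
    have : (2:ℝ)^(j+1) * x = 2^j * (2*x) := by ring
    rw [this, pow_succ]
    ring

lemma f_half_left {t : ℝ} (h0 : 0 ≤ t) (h1 : t ≤ 1) : f (t/2) = t + f t / 2 := by
  have h := f_split (t/2)
  have e : (2:ℝ) * (t/2) = t := by ring
  rw [e, tent_left (by linarith) (by linarith)] at h
  rw [h]; ring

lemma f_half_right {t : ℝ} (h0 : 0 ≤ t) (h1 : t ≤ 1) : f ((t+1)/2) = (1 - t) + f t / 2 := by
  have h := f_split ((t+1)/2)
  have e : (2:ℝ) * ((t+1)/2) = t + 1 := by ring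
  rw [e, tent_right (by linarith) (by linarith)] at h
  have e2 : f (t + 1) = f t := by
    have := tent_add_int t 1
    have ft : f (t + 1) = f t := by
      unfold f
      apply tsum_congr
      intro j
      congr 1
      have : (2:ℝ)^j * (t+1) = 2^j * t + ((2^j : ℤ) : ℝ) := by push_cast; ring
      rw [this, tent_add_int]
    exact ft
  rw [e2] at h
  rw [h]; ring

lemma f_reflect (t : ℝ) : f (1 - t) = f t := by
  unfold f
  apply tsum_congr
  intro j
  congr 1
  have e : (2:ℝ)^j * (1 - t) = -(2^j * t) + ((2^j : ℤ):ℝ) := by push_cast; ring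
  rw [e, tent_add_int, tent_neg]

lemma f_pos {t : ℝ} (h0 : 0 < t) (h1 : t < 1) : 0 < f t := by
  have : 0 < tent t := by
    rcases le_or_gt t (1/2) with h | h
    · rw [tent_left h0.le h]; linarith
    · rw [tent_right h.le h1.le]; linarith
  linarith [f_ge_tent t]

lemma f_eq_zero_iff {t : ℝ} (h0 : 0 ≤ t) (h1 : t ≤ 1) : f t = 0 ↔ t = 0 ∨ t = 1 := by
  constructor
  · intro h
    by_contra hc
    push_neg at hc
    have := f_pos (lt_of_le_of_ne h0 (Ne.symm hc.1)) (lt_of_le_of_ne h1 hc.2)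
    linarith
  · rintro (rfl | rfl)
    · exact f_zero
    · exact f_one

def Dy (n : ℕ) (x : ℝ) : Prop := ∃ a : ℤ, x = (a:ℝ) / 2^n

lemma Dy_double {n : ℕ} {x : ℝ} (h : Dy (n+1) x) : Dy n (2*x) := by
  obtain ⟨a, rfl⟩ := h
  exact ⟨a, by rw [pow_succ]; field_simp⟩

lemma Dy_sub_one {n : ℕ} {x : ℝ} (h : Dy n x) : Dy n (x - 1) := by
  obtain ⟨a, rfl⟩ := h
  exact ⟨a - 2^n, by push_cast; field_simp⟩

lemma Dy_one_sub {n : ℕ} {x : ℝ} (h : Dy n x) : Dy n (1 - x) := by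
  obtain ⟨a, rfl⟩ := h
  exact ⟨2^n - a, by push_cast; field_simp⟩

lemma Dy_pos_lb {n : ℕ} {x : ℝ} (h : Dy n x) (hx : 0 < x) : 1/2^n ≤ x := by
  obtain ⟨a, rfl⟩ := h
  have h2 : (0:ℝ) < 2^n := by positivity
  have ha : (0:ℝ) < a := by
    by_contra hc
    push_neg at hc
    have : (a:ℝ)/2^n ≤ 0 := div_nonpos_of_nonpos_of_nonneg hc h2.le
    linarith
  have ha1 : (1:ℤ) ≤ a := by exact_mod_cast ha
  have h1a : (1:ℝ) ≤ a := by exact_mod_cast ha1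
  exact by gcongr

lemma fl {x : ℝ} (h0 : 0 ≤ x) (h1 : x ≤ 1/2) : f x = 2*x + f (2*x)/2 := by
  have h := f_half_left (t := 2*x) (by linarith) (by linarith)
  have e : (2*x)/2 = x := by ring
  rw [e] at h
  exact h

lemma fr {x : ℝ} (h0 : 1/2 ≤ x) (h1 : x ≤ 1) : f x = (2 - 2*x) + f (2*x - 1)/2 := by
  have h := f_half_right (t := 2*x - 1) (by linarith) (by linarith)
  have e : (2*x - 1 + 1)/2 = x := by ring
  rw [e] at h
  rw [h]; ring

lemma subadd_eq {u v : ℝ} (h : u = 0 ∨ v = 0) : f (u+v) = f u + f v := by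
  rcases h with rfl | rfl
  · rw [zero_add, f_zero, zero_add]
  · rw [add_zero, f_zero, add_zero]


lemma subadd : ∀ n : ℕ, ∀ u v : ℝ, Dy n u → Dy n v → 0 ≤ u → 0 ≤ v →
    u + v ≤ 1 → f (u+v) ≤ f u + f v ∧ (f (u+v) = f u + f v → (u = 0 ∨ v = 0)) := by
  intro n
  induction n with
  | zero =>
    intro u v hu hv hu0 hv0 h1
    have : u = 0 ∨ v = 0 := by
      rcases eq_or_lt_of_le hu0 with h | h
      · exact Or.inl h.symm
      · have h1u := Dy_pos_lb hu h
        simp only [pow_zero] at h1u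
        norm_num at h1u
        right
        rcases eq_or_lt_of_le hv0 with h' | h'
        · exact h'.symm
        · have h1v := Dy_pos_lb hv h'
          simp only [pow_zero] at h1v
          norm_num at h1v
          linarith
    exact ⟨le_of_eq (subadd_eq this), fun _ => this⟩
  | succ n ih =>
    have key : ∀ u v : ℝ, Dy (n+1) u → Dy (n+1) v → 0 ≤ u → 0 ≤ v → u ≤ v →
        u + v ≤ 1 → f (u+v) ≤ f u + f v ∧ (f (u+v) = f u + f v → (u = 0 ∨ v = 0)) := by
      intro u v hu hv hu0 hv0 huv h1
      have hDu := Dy_double hu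
      have hDv := Dy_double hv
      have hu2 : u ≤ 1/2 := by linarith
      rcases le_or_gt v (1/2) with hv2 | hv2
      · -- both ≤ 1/2
        have fu := fl hu0 hu2
        have fv := fl hv0 hv2
        rcases le_or_gt (u + v) (1/2) with hs | hs
        · -- A1
          have fuv : f (u+v) = 2*(u+v) + f (2*u + 2*v)/2 := by
            have h := fl (x := u+v) (by linarith) hs
            have e : 2*(u+v) = 2*u + 2*v := by ring
            rw [e] at h
            linarith [h]
          obtain ⟨hle, heq⟩ := ih (2*u) (2*v) hDu hDv (by linarith) (by linarith)
            (by linarith)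
          constructor
          · linarith
          · intro h
            have : f (2*u + 2*v) = f (2*u) + f (2*v) := by linarith
            rcases heq this with h' | h'
            · left; linarith
            · right; linarith
        · -- A2
          have fuv : f (u+v) = 2 - 2*(u+v) + f (2*u + 2*v - 1)/2 := by
            have h := fr (x := u+v) (by linarith) h1
            have e : 2*(u+v) - 1 = 2*u + 2*v - 1 := by ring
            rw [e] at h
            linarith [h]
          have hrefl : f (2*u + 2*v - 1) = f ((1 - 2*v) + (1 - 2*u)) := by
            have h := f_reflect (2*u + 2*v - 1)
            have e : 1 - (2*u + 2*v - 1) = (1 - 2*v) + (1 - 2*u) := by ring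
            rw [e] at h
            exact h.symm
          obtain ⟨hle, heq⟩ := ih (1 - 2*v) (1 - 2*u) (Dy_one_sub hDv) (Dy_one_sub hDu)
            (by linarith) (by linarith) (by linarith)
          have r1 : f (1 - 2*v) = f (2*v) := f_reflect (2*v)
          have r2 : f (1 - 2*u) = f (2*u) := f_reflect (2*u)
          rw [r1, r2] at hle heq
          rw [hrefl] at fuv
          constructor
          · linarith
          · intro h
            have h2 : u + v = 1/2 := by linarith
            have h3 : f ((1 - 2*v) + (1 - 2*u)) = f (2*v) + f (2*u) := by linarith
            have e0 : (1 - 2*v) + (1 - 2*u) = 0 := by linarith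
            rw [e0, f_zero] at h3
            have hfu : f (2*u) = 0 := by
              have h4 := f_nonneg (2*v); have h5 := f_nonneg (2*u); linarith
            rcases (f_eq_zero_iff (by linarith) (by linarith)).mp hfu with h' | h'
            · left; linarith
            · right; linarith
      · -- v > 1/2 : A3
        have fu := fl hu0 hu2
        have fv := fr hv2.le (by linarith)
        have fuv : f (u+v) = 2 - 2*(u+v) + f (2*u + (2*v - 1))/2 := by
          have h := fr (x := u+v) (by linarith) h1
          have e : 2*(u+v) - 1 = 2*u + (2*v - 1) := by ring
          rw [e] at h
          linarith [h]
        have hD2 : Dy n (2*v - 1) := Dy_sub_one hDv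
        obtain ⟨hle, heq⟩ := ih (2*u) (2*v - 1) hDu hD2 (by linarith)
          (by linarith) (by linarith)
        constructor
        · linarith
        · intro h
          left; linarith
    intro u v hu hv hu0 hv0 h1
    rcases le_total u v with huv | huv
    · exact key u v hu hv hu0 hv0 huv h1
    · have e : u + v = v + u := by ring
      rw [e]
      obtain ⟨hle, heq⟩ := key v u hv hu hv0 hu0 huv (by linarith)
      exact ⟨by linarith, fun h => (heq (by linarith)).symm⟩

def Cd (x y : ℝ) : Prop := ∃ (j : ℤ) (r : ℕ), (x = (j:ℝ)/2^r ∨ y = (j:ℝ)/2^r) ∧ |x - y| ≤ 1/2^r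

lemma straddle_eq {n : ℕ} {x y : ℝ} (hx0 : 0 ≤ x) (hx2 : x ≤ 1/2) (hy2 : 1/2 ≤ y)
    (hy1 : y ≤ 1) (hs : x + y ≤ 1) (hdx : Dy n (2*x)) (hdy : Dy n (2*y - 1)) :
    (f ((x+y)/2) = (f x + f y)/2 + |x - y| ↔ (x = 0 ∨ y = 1/2)) := by
  have habs : |x - y| = y - x := by
    rw [abs_of_nonpos (by linarith)]; ring
  have fm : f ((x+y)/2) = (x+y) + f (x+y)/2 := by
    have h := f_half_left (t := x+y) (by linarith) (by linarith)
    exact h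
  have fsum : f (x+y) = (2 - 2*(x+y)) + f (2*x + (2*y - 1))/2 := by
    have h := fr (x := x+y) (by linarith) (by linarith)
    have e : 2*(x+y) - 1 = 2*x + (2*y - 1) := by ring
    rw [e] at h
    linarith [h]
  have fx := fl hx0 hx2
  have fy := fr hy2 hy1
  obtain ⟨hle, heq⟩ := subadd n (2*x) (2*y - 1) hdx hdy (by linarith) (by linarith)
    (by linarith)
  rw [habs]
  constructor
  · intro h
    have hA : f (2*x + (2*y - 1)) = f (2*x) + f (2*y - 1) := by linarith
    rcases heq hA with h' | h'
    · left; linarith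
    · right; linarith
  · intro h
    have hA : f (2*x + (2*y - 1)) = f (2*x) + f (2*y - 1) := by
      apply subadd_eq
      rcases h with h | h
      · left; rw [h]; ring
      · right; rw [h]; ring
    linarith


lemma straddle_C {x y : ℝ} (hx0 : 0 ≤ x) (hx2 : x ≤ 1/2) (hy2 : 1/2 ≤ y)
    (hy1 : y ≤ 1) (hs : x + y ≤ 1) :
    (Cd x y ↔ (x = 0 ∨ y = 1/2)) := by
  have habs : |x - y| = y - x := by rw [abs_of_nonpos (by linarith)]; ring
  constructor
  · rintro ⟨j, r, hd, hb⟩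
    rw [habs] at hb
    have hP : (0:ℝ) < 2^r := by positivity
    have hb' : (y - x) * 2^r ≤ 1 := (le_div_iff₀ hP).mp hb
    rcases hd with hxe | hye
    · -- x = j/2^r
      have jr : (j:ℝ) = x * 2^r := by rw [hxe]; field_simp
      have hx2' := mul_le_mul_of_nonneg_right hx2 hP.le
      have hy2' := mul_le_mul_of_nonneg_right hy2 hP.le
      have h1R : 2*(j:ℝ) ≤ (2:ℝ)^r := by nlinarith
      have h2R : (2:ℝ)^r - 2 ≤ 2*(j:ℝ) := by nlinarith
      have h1 : 2*j ≤ (2:ℤ)^r := by exact_mod_cast h1R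
      have h2 : (2:ℤ)^r - 2 ≤ 2*j := by exact_mod_cast h2R
      cases r with
      | zero =>
        have hj : j = 0 := by omega
        left
        rw [hxe, hj]; norm_num
      | succ s =>
        have hk : (2:ℤ)^(s+1) = 2*2^s := by ring
        rw [hk] at h1 h2
        have : j = 2^s ∨ j = 2^s - 1 := by omega
        rcases this with hj | hj
        · have hjr : (j:ℝ) = 2^s := by exact_mod_cast congrArg (Int.cast : ℤ → ℝ) hj
          have hx12 : x = 1/2 := by
            rw [hxe, hjr, pow_succ]
            field_simp
          right; linarith
        · have hjr : (j:ℝ) = 2^s - 1 := by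
            rw [hj]; push_cast; ring
          have hQ : (0:ℝ) < 2^s := by positivity
          have hxv : x * 2^(s+1) = 2^(s+1)/2 - 1 := by
            rw [← jr, hjr, pow_succ]; ring
          -- y ≤ x + 1/2^(s+1) = 1/2
          have hP1 : (0:ℝ) < (2:ℝ)^(s+1) := by positivity
          have : y * 2^(s+1) ≤ 2^(s+1)/2 := by nlinarith
          have hy2'' := mul_le_mul_of_nonneg_right hy2 hP1.le
          right
          nlinarith
    · -- y = j/2^r
      have jr : (j:ℝ) = y * 2^r := by rw [hye]; field_simp
      have hy2' := mul_le_mul_of_nonneg_right hy2 hP.le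
      have hxs : x ≤ 1 - y := by linarith
      have hxs' := mul_le_mul_of_nonneg_right hxs hP.le
      have hx0' := mul_le_mul_of_nonneg_right hx0 hP.le
      have h1R : (2:ℝ)^r ≤ 2*(j:ℝ) := by nlinarith
      have h2R : 2*(j:ℝ) ≤ (2:ℝ)^r + 1 := by nlinarith
      have h1 : (2:ℤ)^r ≤ 2*j := by exact_mod_cast h1R
      have h2 : 2*j ≤ (2:ℤ)^r + 1 := by exact_mod_cast h2R
      cases r with
      | zero =>
        have hj : j = 1 := by omega
        have hyv : y = 1 := by rw [hye, hj]; norm_num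
        left; linarith
      | succ s =>
        have hk : (2:ℤ)^(s+1) = 2*2^s := by ring
        rw [hk] at h1 h2
        have hj : j = 2^s := by omega
        have hjr : (j:ℝ) = 2^s := by exact_mod_cast congrArg (Int.cast : ℤ → ℝ) hj
        right
        rw [hye, hjr, pow_succ]
        field_simp
  · intro h
    rcases h with h | h
    · exact ⟨0, 0, Or.inl (by rw [h]; norm_num), by rw [habs]; norm_num; linarith⟩
    · exact ⟨1, 1, Or.inr (by rw [h]; norm_num), by rw [habs, h]; norm_num; linarith⟩

lemma abs_two_mul_sub (x y : ℝ) : |2*x - 2*y| = 2*|x - y| := by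
  rw [show 2*x - 2*y = 2*(x - y) by ring, abs_mul, abs_two]

lemma Cd_scale_left {x y : ℝ} (hx0 : 0 ≤ x) (hx2 : x ≤ 1/2) (hy0 : 0 ≤ y) (hy2 : y ≤ 1/2) :
    Cd x y ↔ Cd (2*x) (2*y) := by
  constructor
  · rintro ⟨j, r, hd, hb⟩
    cases r with
    | zero =>
      refine ⟨2*j, 0, ?_, ?_⟩
      · rcases hd with h | h
        · left; rw [h]; push_cast; ring
        · right; rw [h]; push_cast; ring
      · rw [abs_two_mul_sub]
        have : |x - y| ≤ 1/2 := by
          rw [abs_le]; constructor <;> linarith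
        norm_num; linarith
    | succ s =>
      refine ⟨j, s, ?_, ?_⟩
      · rcases hd with h | h
        · left; rw [h, pow_succ]; field_simp
        · right; rw [h, pow_succ]; field_simp
      · rw [abs_two_mul_sub]
        rw [pow_succ] at hb
        have h2 : (0:ℝ) < 2^s := by positivity
        rw [le_div_iff₀ (by positivity)] at hb ⊢
        nlinarith
  · rintro ⟨j, r, hd, hb⟩
    refine ⟨j, r+1, ?_, ?_⟩
    · rcases hd with h | h
      · left
        have : x = (2*x)/2 := by ring
        rw [this, h, pow_succ]; ring
      · right
        have : y = (2*y)/2 := by ring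
        rw [this, h, pow_succ]; ring
    · rw [abs_two_mul_sub] at hb
      rw [pow_succ]
      rw [le_div_iff₀ (by positivity)] at hb ⊢
      nlinarith

lemma Cd_scale_right {x y : ℝ} (hx0 : 1/2 ≤ x) (hx2 : x ≤ 1) (hy0 : 1/2 ≤ y) (hy2 : y ≤ 1) :
    Cd x y ↔ Cd (2*x - 1) (2*y - 1) := by
  constructor
  · rintro ⟨j, r, hd, hb⟩
    cases r with
    | zero =>
      refine ⟨2*j - 1, 0, ?_, ?_⟩
      · rcases hd with h | h
        · left; rw [h]; push_cast; ring
        · right; rw [h]; push_cast; ring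
      · have e : (2*x - 1) - (2*y - 1) = 2*(x-y) := by ring
        rw [e, abs_mul, abs_two]
        have : |x - y| ≤ 1/2 := by
          rw [abs_le]; constructor <;> linarith
        norm_num; linarith
    | succ s =>
      refine ⟨j - 2^s, s, ?_, ?_⟩
      · rcases hd with h | h
        · left; rw [h, pow_succ]; push_cast; field_simp
        · right; rw [h, pow_succ]; push_cast; field_simp
      · have e : (2*x - 1) - (2*y - 1) = 2*x - 2*y := by ring
        rw [e, abs_two_mul_sub]
        rw [pow_succ] at hb
        rw [le_div_iff₀ (by positivity)] at hb ⊢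
        nlinarith
  · rintro ⟨j, r, hd, hb⟩
    refine ⟨j + 2^r, r+1, ?_, ?_⟩
    · rcases hd with h | h
      · left
        have e : x = ((2*x - 1) + 1)/2 := by ring
        rw [e, h, pow_succ]; push_cast; field_simp
      · right
        have e : y = ((2*y - 1) + 1)/2 := by ring
        rw [e, h, pow_succ]; push_cast; field_simp
    · have e : (2*x - 1) - (2*y - 1) = 2*x - 2*y := by ring
      rw [e, abs_two_mul_sub] at hb
      rw [pow_succ]
      rw [le_div_iff₀ (by positivity)] at hb ⊢
      nlinarith

lemma Cd_reflect_mp {x y : ℝ} (h : Cd x y) : Cd (1-y) (1-x) := by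
  obtain ⟨j, r, hd, hb⟩ := h
  refine ⟨2^r - j, r, ?_, ?_⟩
  · rcases hd with h | h
    · right; rw [h]; push_cast; field_simp
    · left; rw [h]; push_cast; field_simp
  · have e : (1-y) - (1-x) = -(y - x) := by ring
    rw [e, abs_neg, abs_sub_comm]
    exact hb

lemma Cd_reflect {x y : ℝ} : Cd x y ↔ Cd (1-y) (1-x) := by
  constructor
  · exact Cd_reflect_mp
  · intro h
    have := Cd_reflect_mp h
    simpa using this

lemma Cd_symm {x y : ℝ} : Cd x y ↔ Cd y x := by
  constructor <;> rintro ⟨j, r, hd, hb⟩ <;>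
    exact ⟨j, r, hd.symm, by rwa [abs_sub_comm]⟩

lemma f_half_val : f (1/2) = 1 := by
  have h := fl (x := (1/2:ℝ)) (by norm_num) le_rfl
  norm_num [f_one] at h
  linarith

lemma main_lemma : ∀ n : ℕ, ∀ x y : ℝ, Dy n x → Dy n y → 0 ≤ x → x ≤ y → y ≤ 1 →
    (f ((x+y)/2) = (f x + f y)/2 + |x - y| ↔ Cd x y) := by
  intro n
  induction n with
  | zero =>
    intro x y hx hy hx0 hxy hy1
    have hxx : x = 0 ∨ x = 1 := by
      rcases eq_or_lt_of_le hx0 with h | h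
      · exact Or.inl h.symm
      · right
        have := Dy_pos_lb hx h
        norm_num at this
        linarith
    have hyy : y = 0 ∨ y = 1 := by
      rcases eq_or_lt_of_le (le_trans hx0 hxy) with h | h
      · exact Or.inl h.symm
      · right
        have := Dy_pos_lb hy h
        norm_num at this
        linarith
    rcases hxx with rfl | rfl <;> rcases hyy with h | h
    · rw [h]
      apply iff_of_true
      · norm_num [f_zero]
      · exact ⟨0, 0, Or.inl (by norm_num), by norm_num⟩
    · rw [h]
      apply iff_of_true
      · rw [show ((0:ℝ)+1)/2 = 1/2 by norm_num, f_half_val, f_zero, f_one]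
        norm_num
      · exact ⟨0, 0, Or.inl (by norm_num), by norm_num⟩
    · exfalso; rw [h] at hxy; linarith
    · rw [h]
      apply iff_of_true
      · norm_num
      · exact ⟨1, 0, Or.inl (by norm_num), by norm_num⟩
  | succ n ih =>
    intro x y hx hy hx0 hxy hy1
    have hy0 : 0 ≤ y := le_trans hx0 hxy
    have hx1 : x ≤ 1 := le_trans hxy hy1
    rcases le_or_gt y (1/2) with hy2 | hy2
    · -- case (i): both ≤ 1/2
      have hx2 : x ≤ 1/2 := le_trans hxy hy2
      have fx := fl hx0 hx2
      have fy := fl hy0 hy2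
      have fm : f ((x+y)/2) = (x+y) + f (x+y)/2 :=
        f_half_left (by linarith) (by linarith)
      have IH := ih (2*x) (2*y) (Dy_double hx) (Dy_double hy) (by linarith)
        (by linarith) (by linarith)
      rw [show (2*x + 2*y)/2 = x + y by ring, abs_two_mul_sub] at IH
      rw [← Cd_scale_left hx0 hx2 hy0 hy2] at IH
      rw [← IH]
      constructor <;> intro h <;> linarith
    · rcases le_or_gt (1/2) x with hx2 | hx2
      · -- case (ii): both ≥ 1/2
        have fx := fr hx2 hx1
        have fy := fr hy2.le hy1
        have fm : f ((x+y)/2) = (2 - (x+y)) + f (x+y-1)/2 := by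
          have h := f_half_right (t := x+y-1) (by linarith) (by linarith)
          rw [show (x+y-1+1)/2 = (x+y)/2 by ring] at h
          rw [h]; ring_nf
        have IH := ih (2*x-1) (2*y-1) (Dy_sub_one (Dy_double hx))
          (Dy_sub_one (Dy_double hy)) (by linarith) (by linarith) (by linarith)
        rw [show ((2*x-1) + (2*y-1))/2 = x + y - 1 by ring,
          show (2*x-1) - (2*y-1) = 2*x - 2*y by ring, abs_two_mul_sub] at IH
        rw [← Cd_scale_right hx2 hx1 hy2.le hy1] at IH
        rw [← IH]
        constructor <;> intro h <;> linarith
      · -- case (iii): x < 1/2 < y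
        rcases le_or_gt (x + y) 1 with hs | hs
        · rw [straddle_eq (n := n) hx0 hx2.le hy2.le hy1 hs (Dy_double hx)
            (Dy_sub_one (Dy_double hy)),
            straddle_C hx0 hx2.le hy2.le hy1 hs]
        · -- case (iv): reflect
          have hrefl : f ((x+y)/2) = f (((1-y)+(1-x))/2) := by
            rw [show ((1-y)+(1-x))/2 = 1 - (x+y)/2 by ring, f_reflect]
          have h1 : f (1-y) = f y := f_reflect y
          have h2 : f (1-x) = f x := f_reflect x
          have habs : |(1-y) - (1-x)| = |x - y| := by
            rw [show (1-y)-(1-x) = -(y-x) by ring, abs_neg, abs_sub_comm]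
          have hstr := straddle_eq (n := n) (x := 1-y) (y := 1-x)
            (by linarith) (by linarith) (by linarith) (by linarith) (by linarith)
            (Dy_double (Dy_one_sub hy))
            (by
              have := Dy_double (Dy_one_sub hx)
              have e : 2*(1-x) - 1 = 2*(1-x) - 1 := rfl
              exact Dy_sub_one this)
          rw [h1, h2, habs, ← hrefl] at hstr
          have hC := straddle_C (x := 1-y) (y := 1-x)
            (by linarith) (by linarith) (by linarith) (by linarith) (by linarith)
          rw [← Cd_reflect] at hC
          constructor
          · intro h
            exact hC.mpr (hstr.mp (by linarith))
          · intro h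
            have := hstr.mpr (hC.mp h)
            linarith

lemma Dy_mono {r n : ℕ} (h : r ≤ n) {x : ℝ} (hx : Dy r x) : Dy n x := by
  obtain ⟨a, rfl⟩ := hx
  refine ⟨a * 2^(n-r), ?_⟩
  push_cast
  rw [div_eq_div_iff (by positivity) (by positivity), mul_assoc, ← pow_add]
  congr 2
  omega

lemma neg_exp_zero {z : ℝ} (hz0 : 0 ≤ z) (hz1 : z ≤ 1) {j r : ℤ} (hr : r < 0)
    (h : z = (j:ℝ) / 2^r) : z = 0 := by
  have hP : (0:ℝ) < (2:ℝ)^r := zpow_pos (by norm_num) r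
  have hle : (2:ℝ)^r ≤ 1/2 := by
    have : (2:ℝ)^r ≤ (2:ℝ)^(-1:ℤ) := by
      apply zpow_le_zpow_right₀ (by norm_num)
      omega
    simpa using this
  have jr : (j:ℝ) = z * 2^r := by rw [h]; field_simp
  have h0 : (0:ℝ) ≤ (j:ℝ) := by rw [jr]; exact mul_nonneg hz0 hP.le
  have h1 : (j:ℝ) < 1 := by nlinarith
  have hj0 : (0:ℤ) ≤ j := by exact_mod_cast h0
  have hj1 : j < 1 := by exact_mod_cast h1
  have : j = 0 := by omega
  rw [h, this]
  norm_num

lemma Cd_int {x y : ℝ} (hx0 : 0 ≤ x) (hx1 : x ≤ 1) (hy0 : 0 ≤ y) (hy1 : y ≤ 1) :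
    (∃ (j r : ℤ), (x = (j:ℝ) / 2 ^ r ∨ y = (j:ℝ) / 2 ^ r) ∧ |x - y| ≤ 1 / 2 ^ r) ↔ Cd x y := by
  have habs1 : |x - y| ≤ 1 := abs_le.mpr ⟨by linarith, by linarith⟩
  constructor
  · rintro ⟨j, r, hd, hb⟩
    rcases le_or_gt 0 r with hr | hr
    · lift r to ℕ using hr with rn
      simp only [zpow_natCast] at hd hb
      exact ⟨j, rn, hd, hb⟩
    · rcases hd with h | h
      · exact ⟨0, 0, Or.inl (by rw [neg_exp_zero hx0 hx1 hr h]; norm_num),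
          by norm_num; exact habs1⟩
      · exact ⟨0, 0, Or.inr (by rw [neg_exp_zero hy0 hy1 hr h]; norm_num),
          by norm_num; exact habs1⟩
  · rintro ⟨j, rn, hd, hb⟩
    refine ⟨j, (rn:ℤ), ?_, ?_⟩
    · rcases hd with h | h
      · left; rw [h, zpow_natCast]
      · right; rw [h, zpow_natCast]
    · rw [zpow_natCast]; exact hb

theorem takagi_one_equality_iff (x y : ℝ)
    (hx : x ∈ Set.Icc (0:ℝ) 1) (hy : y ∈ Set.Icc (0:ℝ) 1)
    (hxd : ∃ (a : ℤ) (r : ℕ), x = (a:ℝ) / 2 ^ r)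
    (hyd : ∃ (b : ℤ) (s : ℕ), y = (b:ℝ) / 2 ^ s) :
    takagi 1 ((x + y) / 2) = (takagi 1 x + takagi 1 y) / 2 + |x - y|
      ↔ ∃ (j r : ℤ), (x = (j:ℝ) / 2 ^ r ∨ y = (j:ℝ) / 2 ^ r) ∧ |x - y| ≤ 1 / 2 ^ r := by
  obtain ⟨hx0, hx1⟩ := hx
  obtain ⟨hy0, hy1⟩ := hy
  obtain ⟨a, r, hxe⟩ := hxd
  obtain ⟨b, s, hye⟩ := hyd
  rw [takagi_one_eq, takagi_one_eq, takagi_one_eq]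
  have hdx : Dy (max r s) x := Dy_mono (le_max_left r s) ⟨a, hxe⟩
  have hdy : Dy (max r s) y := Dy_mono (le_max_right r s) ⟨b, hye⟩
  have hmain : (f ((x+y)/2) = (f x + f y)/2 + |x - y| ↔ Cd x y) := by
    rcases le_total x y with h | h
    · exact main_lemma _ x y hdx hdy hx0 h hy1
    · have h2 := main_lemma _ y x hdy hdx hy0 h hx1
      rw [show (y+x)/2 = (x+y)/2 by ring, abs_sub_comm y x,
        show f y + f x = f x + f y by ring] at h2
      exact h2.trans Cd_symm.symm
  rw [hmain]
  exact (Cd_int hx0 hx1 hy0 hy1).symm
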